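/- Strange duality formalism: let A and B be finite-dimensional vector spaces of the same dimension m, and s ∈ A ⊗ B. Suppose there exist linear functionals x_1,…,x_m ∈ A^* and y_1,…,y_m ∈ B^* such that (x_a ⊗ y_b)(s) = 0 for a ≠ b and (x_a ⊗ y_a)(s) ≠ 0 for all a. Then: (1) the elements α_a = (x_a ⊗ id)(s) ∈ B form a basis of B and β_a = (id ⊗ y_a)(s) ∈ A form a basis of A; (2) the induced map D: A^* → B, φ ↦ (φ ⊗ id)(s), is an isomorphism; (3) s = Σ_a c_a β_a ⊗ α_a for nonzero scalars c_a (explicitly c_a = ((x_a ⊗ y_a)(s))^{-1} after suitable normalization, i.e., s is 'diagonal' in these bases). -/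

import Mathlib

/-!
Both `y_b(α_a)` and `x_a(β_b)` equal `(x_a ⊗ y_b)(s)`, so `(y_b)` is biorthogonal to `(α_a)` and
`(x_a)` to `(β_a)`, with nonzero diagonal. Hence both families are linearly independent, and bases
by counting dimensions. `D` hits every `α_a`, so it is onto, hence bijective as
`dim A^* = dim B`. Finally `x_a` is a multiple of the `a`-th coordinate functional of the basis
`β`, and expanding `s` in that basis gives the diagonal form.
-/

open TensorProduct Module

section

variable {K ι V W : Type*} [Field K] [AddCommGroup V] [Module K V] [AddCommGroup W] [Module K W]

theorem LinearIndependent.of_pairwise_dual_eq_zero_ne_zero (v : ι → V) (f : ι → Dual K V)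
    (h0 : Pairwise fun i j ↦ f i (v j) = 0) (h1 : ∀ i, f i (v i) ≠ 0) :
    LinearIndependent K v :=
  .of_pairwise_dual_eq_zero_one v (fun i ↦ (f i (v i))⁻¹ • f i)
    (fun i j hij ↦ by simp [h0 hij]) (fun i ↦ by simp [h1 i])

theorem Module.Basis.eq_smul_coord_of_pairwise (b : Basis ι K V) (f : ι → Dual K V)
    (h0 : Pairwise fun i j ↦ f i (b j) = 0) (i : ι) :
    f i = f i (b i) • b.coord i := by
  classical
  refine b.ext fun j ↦ ?_
  obtain rfl | hij := eq_or_ne i j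
  · simp
  · simp [h0 hij, Finsupp.single_eq_of_ne hij]

theorem LinearMap.bijective_of_finrank_eq_of_span_range_comp_eq_top [FiniteDimensional K V]
    [FiniteDimensional K W] (f : V →ₗ[K] W) (h : finrank K V = finrank K W) (v : ι → V)
    (hv : Submodule.span K (Set.range (f ∘ v)) = ⊤) : Function.Bijective f := by
  have hsurj : Function.Surjective f := by
    rw [← LinearMap.range_eq_top, eq_top_iff, ← hv, Submodule.span_le]
    rintro _ ⟨i, rfl⟩
    exact ⟨v i, rfl⟩
  exact ⟨(LinearMap.injective_iff_surjective_of_finrank_eq_finrank h).mpr hsurj, hsurj⟩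

end

namespace TensorProduct

variable {K A B : Type*} [Field K] [AddCommGroup A] [Module K A] [AddCommGroup B] [Module K B]

/-- The map `D : A^* → B`, `φ ↦ (φ ⊗ id)(s)`, of the paper. -/
def leftContraction (s : A ⊗[K] B) : Dual K A →ₗ[K] B :=
  (TensorProduct.lid K B).toLinearMap ∘ₗ LinearMap.applyₗ s ∘ₗ LinearMap.rTensorHom B

theorem leftContraction_apply (s : A ⊗[K] B) (φ : Dual K A) :
    leftContraction s φ = TensorProduct.lid K B (TensorProduct.map φ LinearMap.id s) :=
  rfl

theorem apply_leftContraction (s : A ⊗[K] B) (φ : Dual K A) (ψ : Dual K B) :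
    ψ (leftContraction s φ) = TensorProduct.lid K K (TensorProduct.map φ ψ s) := by
  rw [leftContraction_apply]
  induction s using TensorProduct.induction_on with
  | zero => simp
  | tmul a b => simp
  | add u v hu hv => simp_all

theorem apply_rid_map_id (s : A ⊗[K] B) (φ : Dual K A) (ψ : Dual K B) :
    φ (TensorProduct.rid K A (TensorProduct.map LinearMap.id ψ s)) =
      TensorProduct.lid K K (TensorProduct.map φ ψ s) := by
  induction s using TensorProduct.induction_on with
  | zero => simp
  | tmul a b => simp [mul_comm]
  | add u v hu hv => simp_all

theorem eq_sum_tmul_leftContraction_coord {ι : Type*} [Fintype ι] (b : Basis ι K A)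
    (s : A ⊗[K] B) : s = ∑ i, b i ⊗ₜ leftContraction s (b.coord i) := by
  classical
  conv_lhs => rw [← (equivFinsuppOfBasisLeft b).symm_apply_apply s]
  rw [equivFinsuppOfBasisLeft_symm_apply, Finsupp.sum_fintype _ _ (by simp)]
  simp [equivFinsuppOfBasisLeft_apply, leftContraction]

/-- Functionals biorthogonal to `b` are rescaled coordinate functionals of `b`. -/
theorem eq_sum_smul_tmul_leftContraction_of_pairwise {ι : Type*} [Fintype ι]
    (b : Basis ι K A) (x : ι → Dual K A) (h0 : Pairwise fun i j ↦ x i (b j) = 0)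
    (h1 : ∀ i, x i (b i) ≠ 0) (s : A ⊗[K] B) :
    s = ∑ i, (x i (b i))⁻¹ • (b i ⊗ₜ leftContraction s (x i)) := by
  conv_lhs => rw [eq_sum_tmul_leftContraction_coord b s]
  refine Finset.sum_congr rfl fun i _ ↦ ?_
  rw [← tmul_smul, ← map_smul, eq_inv_smul_iff₀ (h1 i) |>.mpr (b.eq_smul_coord_of_pairwise x h0 i).symm]

end TensorProduct

/-- Strange duality formalism.  Let A, B be finite-dimensional K-vector
spaces of the same dimension m and s ∈ A ⊗ B.  If there are functionals x_1,…,x_m ∈ A^*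
and y_1,…,y_m ∈ B^* with (x_a ⊗ y_b)(s) = 0 for a ≠ b and (x_a ⊗ y_a)(s) ≠ 0, then:
(1) the α_a = (x_a ⊗ id)(s) form a basis of B and the β_a = (id ⊗ y_a)(s) form a basis
of A; (2) the map D : A^* → B, φ ↦ (φ ⊗ id)(s), is an isomorphism; (3) s = Σ c_a β_a ⊗ α_a
for nonzero scalars c_a (s is diagonal in these bases). -/
theorem strange_duality_formalism (K : Type*) [Field K]
    (A B : Type*) [AddCommGroup A] [Module K A] [AddCommGroup B] [Module K B]
    [FiniteDimensional K A] [FiniteDimensional K B]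
    (m : ℕ) (hA : Module.finrank K A = m) (hB : Module.finrank K B = m)
    (s : A ⊗[K] B) (x : Fin m → Module.Dual K A) (y : Fin m → Module.Dual K B)
    (horth : ∀ a b : Fin m, a ≠ b →
      TensorProduct.lid K K (TensorProduct.map (x a) (y b) s) = 0)
    (hdiag : ∀ a : Fin m,
      TensorProduct.lid K K (TensorProduct.map (x a) (y a) s) ≠ 0) :
    letI α : Fin m → B := fun a =>
      TensorProduct.lid K B (TensorProduct.map (x a) LinearMap.id s)
    letI β : Fin m → A := fun a =>
      TensorProduct.rid K A (TensorProduct.map LinearMap.id (y a) s)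
    (LinearIndependent K α ∧ Submodule.span K (Set.range α) = ⊤) ∧
    (LinearIndependent K β ∧ Submodule.span K (Set.range β) = ⊤) ∧
    Function.Bijective (fun φ : Module.Dual K A =>
      TensorProduct.lid K B (TensorProduct.map φ LinearMap.id s)) ∧
    (∃ c : Fin m → K, (∀ a, c a ≠ 0) ∧ s = ∑ a, c a • (β a ⊗ₜ[K] α a)) := by
  set α : Fin m → B := fun a ↦ leftContraction s (x a)
  set β : Fin m → A := fun a ↦ TensorProduct.rid K A (TensorProduct.map LinearMap.id (y a) s)
  have hyα (a b : Fin m) : y b (α a) = TensorProduct.lid K K (TensorProduct.map (x a) (y b) s) :=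
    apply_leftContraction s (x a) (y b)
  have hxβ (a b : Fin m) : x a (β b) = TensorProduct.lid K K (TensorProduct.map (x a) (y b) s) :=
    apply_rid_map_id s (x a) (y b)
  have hliα : LinearIndependent K α := .of_pairwise_dual_eq_zero_ne_zero α y
    (fun b a hba ↦ (hyα a b).trans (horth a b hba.symm)) (fun a ↦ (hyα a a).trans_ne (hdiag a))
  have hxβ_ne (a b : Fin m) (hab : a ≠ b) : x a (β b) = 0 := (hxβ a b).trans (horth a b hab)
  have hxβ_self (a : Fin m) : x a (β a) ≠ 0 := (hxβ a a).trans_ne (hdiag a)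
  have hliβ : LinearIndependent K β := .of_pairwise_dual_eq_zero_ne_zero β x hxβ_ne hxβ_self
  have hspanα := hliα.span_eq_top_of_card_eq_finrank' (by simp [hB])
  have hspanβ := hliβ.span_eq_top_of_card_eq_finrank' (by simp [hA])
  obtain ⟨bβ, hbβ⟩ : ∃ b : Basis (Fin m) K A, ⇑b = β := ⟨.mk hliβ hspanβ.ge, Basis.coe_mk _ _⟩
  have hs := eq_sum_smul_tmul_leftContraction_of_pairwise bβ x (hbβ ▸ hxβ_ne) (hbβ ▸ hxβ_self) s
  rw [hbβ] at hs
  exact ⟨⟨hliα, hspanα⟩, ⟨hliβ, hspanβ⟩,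
    (leftContraction s).bijective_of_finrank_eq_of_span_range_comp_eq_top
      (by rw [Subspace.dual_finrank_eq, hA, hB]) x hspanα,
    fun a ↦ (x a (β a))⁻¹, fun a ↦ inv_ne_zero (hxβ_self a), hs⟩
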